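/- Let X, Y, Z be real Banach spaces, let i : X → Y be an injective compact continuous linear map, and let j : Y → Z be an injective continuous linear map. Then for every ε > 0 there exists a constant C(ε) > 0 such that ‖i x‖_Y ≤ ε ‖x‖_X + C(ε) ‖j(i x)‖_Z for every x ∈ X. -/
import Mathlib


/-- Ehrling's lemma (Aubin–Lions inequality): if `X` is compactly embedded in `Y`
(via an injective compact continuous linear map `i`) and `Y` is continuously embedded
in `Z` (via an injective continuous linear map `j`), then for every `ε > 0` there is a
constant `C > 0` such that `‖i x‖ ≤ ε ‖x‖ + C ‖j (i x)‖` for every `x ∈ X`. -/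
theorem ehrling_lemma
    {X Y Z : Type*}
    [NormedAddCommGroup X] [NormedSpace ℝ X] [CompleteSpace X]
    [NormedAddCommGroup Y] [NormedSpace ℝ Y] [CompleteSpace Y]
    [NormedAddCommGroup Z] [NormedSpace ℝ Z] [CompleteSpace Z]
    (i : X →L[ℝ] Y) (hi_compact : IsCompactOperator i)
    (hi_inj : Function.Injective i)
    (j : Y →L[ℝ] Z) (hj_inj : Function.Injective j) :
    ∀ ε > (0 : ℝ), ∃ C > (0 : ℝ), ∀ x : X, ‖i x‖ ≤ ε * ‖x‖ + C * ‖j (i x)‖ := by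
  intro ε hε
  by_contra hcon
  push_neg at hcon
  -- For each `n : ℕ`, pick `x n` violating the inequality with `C = n + 1`.
  have hpick : ∀ n : ℕ, ∃ x : X, ε * ‖x‖ + (n + 1 : ℝ) * ‖j (i x)‖ < ‖i x‖ := by
    intro n
    obtain ⟨x, hx⟩ := hcon (n + 1 : ℝ) (by positivity)
    exact ⟨x, hx⟩
  choose x hx using hpick
  -- `x n ≠ 0`
  have hxne : ∀ n, x n ≠ 0 := by
    intro n hn
    have := hx n
    rw [hn] at this
    simp at this
  -- normalized sequence
  set u : ℕ → X := fun n => ‖x n‖⁻¹ • x n with hu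
  have hunorm : ∀ n, ‖u n‖ = 1 := by
    intro n
    simp only [hu, norm_smul, norm_inv, norm_norm]
    field_simp [norm_ne_zero_iff.mpr (hxne n)]
  have hiu : ∀ n, i (u n) = ‖x n‖⁻¹ • i (x n) := by
    intro n; simp [hu]
  have hju : ∀ n, j (i (u n)) = ‖x n‖⁻¹ • j (i (x n)) := by
    intro n; simp [hiu n]
  have hxpos : ∀ n, (0:ℝ) < ‖x n‖ := fun n => norm_pos_iff.mpr (hxne n)
  -- the key inequality for the normalized sequence
  have hkey : ∀ n : ℕ, ε + (n + 1 : ℝ) * ‖j (i (u n))‖ < ‖i (u n)‖ := by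
    intro n
    have h := hx n
    have h1 : ‖i (u n)‖ = ‖x n‖⁻¹ * ‖i (x n)‖ := by
      rw [hiu n, norm_smul, norm_inv, norm_norm]
    have h2 : ‖j (i (u n))‖ = ‖x n‖⁻¹ * ‖j (i (x n))‖ := by
      rw [hju n, norm_smul, norm_inv, norm_norm]
    rw [h1, h2]
    have hinv : (0:ℝ) < ‖x n‖⁻¹ := inv_pos.mpr (hxpos n)
    have := mul_lt_mul_of_pos_left h hinv
    calc ε + (n + 1 : ℝ) * (‖x n‖⁻¹ * ‖j (i (x n))‖)
        = ‖x n‖⁻¹ * (ε * ‖x n‖ + (n + 1 : ℝ) * ‖j (i (x n))‖) := by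
          field_simp [ne_of_gt (hxpos n)]
      _ < ‖x n‖⁻¹ * ‖i (x n)‖ := this
  -- `i (u n)` lies in a compact set
  have hbdd : Bornology.IsBounded (Set.range u) := by
    apply Bornology.IsBounded.subset (Metric.isBounded_closedBall (x := (0:X)) (r := 1))
    rintro _ ⟨n, rfl⟩
    simp [Metric.mem_closedBall, dist_zero_right, hunorm n]
  obtain ⟨K, hK, hKsub⟩ := hi_compact.image_subset_compact_of_bounded (𝕜₁ := ℝ) hbdd
  have hmem : ∀ n, i (u n) ∈ K := fun n => hKsub ⟨u n, Set.mem_range_self n, rfl⟩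
  obtain ⟨y, hyK, φ, hφ, hlim⟩ := hK.tendsto_subseq hmem
  -- `j (i (u n)) → 0`
  have hjbound : ∀ n : ℕ, ‖j (i (u n))‖ ≤ ‖i‖ / (n + 1 : ℝ) := by
    intro n
    have h1 : ‖i (u n)‖ ≤ ‖i‖ := by
      calc ‖i (u n)‖ ≤ ‖i‖ * ‖u n‖ := i.le_opNorm _
        _ = ‖i‖ := by rw [hunorm n, mul_one]
    have h2 : (n + 1 : ℝ) * ‖j (i (u n))‖ < ‖i‖ := by
      have := hkey n
      nlinarith [norm_nonneg (j (i (u n)))]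
    rw [le_div_iff₀ (by positivity)]
    linarith [mul_comm (n + 1 : ℝ) ‖j (i (u n))‖]
  have hjlim : Filter.Tendsto (fun n => j (i (u n))) Filter.atTop (nhds 0) := by
    rw [tendsto_zero_iff_norm_tendsto_zero]
    apply squeeze_zero (fun n => norm_nonneg _) hjbound
    apply Filter.Tendsto.div_atTop tendsto_const_nhds
    exact Filter.tendsto_atTop_add_const_right _ _ tendsto_natCast_atTop_atTop
  -- along the subsequence, `j (i (u (φ k))) → j y`, hence `j y = 0`, hence `y = 0`
  have hjy : j y = 0 := by
    have h1 : Filter.Tendsto (fun k => j (i (u (φ k)))) Filter.atTop (nhds (j y)) :=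
      (j.continuous.tendsto y).comp hlim
    have h2 : Filter.Tendsto (fun k => j (i (u (φ k)))) Filter.atTop (nhds 0) :=
      hjlim.comp hφ.tendsto_atTop
    exact tendsto_nhds_unique h1 h2
  have hy0 : y = 0 := by
    apply hj_inj
    rw [hjy, map_zero]
  -- but `‖i (u n)‖ > ε`, so `‖y‖ ≥ ε > 0`, contradiction
  have hnormlim : Filter.Tendsto (fun k => ‖i (u (φ k))‖) Filter.atTop (nhds ‖y‖) :=
    (continuous_norm.tendsto y).comp hlim
  have hge : ε ≤ ‖y‖ := by
    apply le_of_tendsto_of_tendsto tendsto_const_nhds hnormlim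
    filter_upwards with k
    have := hkey (φ k)
    nlinarith [norm_nonneg (j (i (u (φ k))))]
  rw [hy0, norm_zero] at hge
  linarith
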